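/- Let R be a Noetherian ring, A the largest right ideal of R with |A|_r < |R|_r, assumed nonzero. Then every prime ideal P of R with |R/P|_r = |R|_r contains A; consequently Λ(R) = Λ(R/A), where Λ(R) = {P ∈ Spec R : |R/P|_r = |R|_r} and Λ(R/A) is identified with the set of primes of R containing A whose quotient has full right Krull dimension. -/

import Mathlib

universe u

/-- `DevLE α o`: the Gabriel–Rentschler deviation of the preorder `α` is at most `o`. -/
def DevLE (α : Type u) [Preorder α] (o : Ordinal.{u}) : Prop :=
  ∀ f : ℕ → α, (∀ n, f (n + 1) ≤ f n) →
    ∃ N : ℕ, ∀ n, N ≤ n →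
      f n ≤ f (n + 1) ∨
        ∃ o' : {x : Ordinal.{u} // x < o},
          DevLE {y : α // f (n + 1) ≤ y ∧ y ≤ f n} o'.1
termination_by o
decreasing_by exact o'.2

/-- The deviation (Krull dimension) of a preorder, as the least ordinal bound. -/
noncomputable def dev (α : Type u) [Preorder α] : Ordinal.{u} := sInf {o | DevLE α o}

/-- The left Krull dimension of a ring: deviation of the lattice of left ideals. -/
noncomputable def lKdim (R : Type u) [Ring R] : Ordinal.{u} := dev (Submodule R R)

/-- The right Krull dimension of a ring: deviation of the lattice of right ideals. -/
noncomputable def rKdim (R : Type u) [Ring R] : Ordinal.{u} := dev (Submodule Rᵐᵒᵖ R)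

/-- Krull dimension of a right ideal `J` as a right module: deviation of `[⊥, J]`. -/
noncomputable def rIdealDim (R : Type u) [Ring R] (J : Submodule Rᵐᵒᵖ R) : Ordinal.{u} :=
  dev {I : Submodule Rᵐᵒᵖ R // I ≤ J}

/-- Krull dimension of a left ideal `J` as a left module. -/
noncomputable def lIdealDim (R : Type u) [Ring R] (J : Submodule R R) : Ordinal.{u} :=
  dev {I : Submodule R R // I ≤ J}

/-- A ring is right Krull homogeneous if every nonzero right ideal has full dimension. -/
def RightKH (R : Type u) [Ring R] : Prop :=
  ∀ J : Submodule Rᵐᵒᵖ R, J ≠ ⊥ → rIdealDim R J = rKdim R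

def LeftKH (R : Type u) [Ring R] : Prop :=
  ∀ J : Submodule R R, J ≠ ⊥ → lIdealDim R J = lKdim R

/-- A two-sided ideal is prime if it is proper and `aRb ⊆ P` implies `a ∈ P` or `b ∈ P`. -/
def IsPrimeT {R : Type u} [Ring R] (P : TwoSidedIdeal R) : Prop :=
  (P : Set R) ≠ Set.univ ∧ ∀ a b : R, (∀ r : R, a * r * b ∈ P) → a ∈ P ∨ b ∈ P

/-- Right Krull dimension of the quotient ring `R/I`. -/
noncomputable def rKdimQ {R : Type u} [Ring R] (I : TwoSidedIdeal R) : Ordinal.{u} :=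
  rKdim I.ringCon.Quotient

noncomputable def lKdimQ {R : Type u} [Ring R] (I : TwoSidedIdeal R) : Ordinal.{u} :=
  lKdim I.ringCon.Quotient

/-- `Λ(R)`: primes with full right Krull dimension. -/
def Lam (R : Type u) [Ring R] : Set (TwoSidedIdeal R) :=
  {P | IsPrimeT P ∧ rKdimQ P = rKdim R}

/-- `Λ'(R)`: primes with full left Krull dimension. -/
def Lam' (R : Type u) [Ring R] : Set (TwoSidedIdeal R) :=
  {P | IsPrimeT P ∧ lKdimQ P = lKdim R}

/-- A two-sided ideal viewed as a right ideal. -/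
def rightIdealOf {R : Type u} [Ring R] (I : TwoSidedIdeal R) : Submodule Rᵐᵒᵖ R where
  carrier := I
  zero_mem' := I.zero_mem
  add_mem' := I.add_mem
  smul_mem' := fun r x hx => I.mul_mem_right x r.unop hx

/-- A two-sided ideal viewed as a left ideal. -/
def leftIdealOf {R : Type u} [Ring R] (I : TwoSidedIdeal R) : Submodule R R where
  carrier := I
  zero_mem' := I.zero_mem
  add_mem' := I.add_mem
  smul_mem' := fun r x hx => I.mul_mem_left r x hx

/-- The right annihilator of a set, as a right ideal. -/
def rAnnIdeal (R : Type u) [Ring R] (S : Set R) : Submodule Rᵐᵒᵖ R where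
  carrier := {x | ∀ y ∈ S, y * x = 0}
  zero_mem' := by intro y _; simp
  add_mem' := by intro a b ha hb y hy; rw [mul_add, ha y hy, hb y hy, add_zero]
  smul_mem' := by
    intro r x hx y hy
    show y * (x * r.unop) = 0
    rw [← mul_assoc, hx y hy, zero_mul]

/-- The left annihilator of a set. -/
def lAnnSet (R : Type u) [Ring R] (S : Set R) : Set R := {x | ∀ y ∈ S, x * y = 0}

/-! If `P` is prime and `A ⊄ P`, then the right annihilator of `A` lies in `P`. Writing
`A = R g₁ + ⋯ + R gₘ` as a left ideal, the right-linear map `r ↦ (gᵢ r)ᵢ : R → Aᵐ` has kernel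
`r(A) ⊆ P`, so the right ideals of `R/P` embed order-preservingly into the submodules of `Aᵐ`.
Deviation is bounded under extensions in a modular lattice, hence `|Aᵐ|_r ≤ |A|_r`, and so
`|R/P|_r ≤ |A|_r < |R|_r`. -/

theorem devLE_iff {α : Type u} [Preorder α] {o : Ordinal.{u}} :
    DevLE α o ↔ ∀ f : ℕ → α, (∀ n, f (n + 1) ≤ f n) →
      ∃ N : ℕ, ∀ n, N ≤ n →
        f n ≤ f (n + 1) ∨
          ∃ o' : {x : Ordinal.{u} // x < o},
            DevLE {y : α // f (n + 1) ≤ y ∧ y ≤ f n} o'.1 := by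
  rw [DevLE]

theorem devLE_of_subsingleton {α : Type u} [Preorder α] [Subsingleton α] (o : Ordinal.{u}) :
    DevLE α o :=
  devLE_iff.2 fun _ _ => ⟨0, fun _ _ => Or.inl (Subsingleton.elim _ _).le⟩

theorem devLE_Icc_of_le {α : Type u} [PartialOrder α] {a b : α} (hba : b ≤ a)
    (o : Ordinal.{u}) : DevLE {y : α // a ≤ y ∧ y ≤ b} o :=
  haveI : Subsingleton {y : α // a ≤ y ∧ y ≤ b} :=
    ⟨fun x y => Subtype.ext <| (x.2.2.trans (hba.trans y.2.1)).antisymm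
      (y.2.2.trans (hba.trans x.2.1))⟩
  devLE_of_subsingleton o

theorem DevLE.mono {α : Type u} [Preorder α] {o₁ o₂ : Ordinal.{u}} (hd : DevLE α o₁)
    (h : o₁ ≤ o₂) : DevLE α o₂ := by
  rw [devLE_iff] at hd ⊢
  intro f hf
  obtain ⟨N, hN⟩ := hd f hf
  refine ⟨N, fun n hn => (hN n hn).imp_right ?_⟩
  rintro ⟨o', ho'⟩
  exact ⟨⟨o'.1, o'.2.trans_le h⟩, ho'⟩

theorem DevLE.of_monotone_injective {α β : Type u} [Preorder α] [PartialOrder β]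
    {F : α → β} (hm : Monotone F) (hi : Function.Injective F) {o : Ordinal.{u}}
    (h : DevLE β o) : DevLE α o := by
  rw [devLE_iff] at h ⊢
  intro f hf
  obtain ⟨N, hN⟩ := h (F ∘ f) (fun n => hm (hf n))
  refine ⟨N, fun n hn => ?_⟩
  rcases hN n hn with hle | ⟨o', ho'⟩
  · exact Or.inl (hi ((hm (hf n)).antisymm hle)).ge
  · exact Or.inr ⟨o', DevLE.of_monotone_injective
      (F := fun y : {y : α // f (n + 1) ≤ y ∧ y ≤ f n} => (⟨F y.1, hm y.2.1, hm y.2.2⟩ :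
        {z : β // F (f (n + 1)) ≤ z ∧ z ≤ F (f n)}))
      (fun _ _ hxy => hm hxy) (fun _ _ hxy => Subtype.ext (hi (congrArg Subtype.val hxy))) ho'⟩
termination_by o
decreasing_by exact o'.2

theorem DevLE.Icc_of_Icc_subtype {α : Type u} [PartialOrder α] {P : α → Prop} {a b : {x // P x}}
    (hP : ∀ y, a.1 ≤ y → y ≤ b.1 → P y) {o : Ordinal.{u}}
    (h : DevLE {y : {x // P x} // a ≤ y ∧ y ≤ b} o) : DevLE {y : α // a.1 ≤ y ∧ y ≤ b.1} o :=
  h.of_monotone_injective (F := fun y => ⟨⟨y.1, hP _ y.2.1 y.2.2⟩, y.2.1, y.2.2⟩)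
    (fun _ _ hxy => hxy) (fun _ _ hxy => Subtype.ext (congrArg (·.1.1) hxy))

theorem dev_le_of_devLE {α : Type u} [Preorder α] {o : Ordinal.{u}} (h : DevLE α o) :
    dev α ≤ o :=
  csInf_le' h

theorem devLE_dev {α : Type u} [Preorder α] (h : ∃ o, DevLE α o) : DevLE α (dev α) :=
  csInf_mem h

theorem exists_devLE_of_dev_ne_zero {α : Type u} [Preorder α] (h : dev α ≠ 0) :
    ∃ o, DevLE α o := by
  by_contra! hne
  exact h (by simp [dev, hne])

section ModularLattice

variable {α : Type u} [Lattice α] [IsModularLattice α]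

instance {q p : α} : Lattice {y : α // q ≤ y ∧ y ≤ p} :=
  Subtype.lattice (fun _ _ hx hy => ⟨le_sup_of_le_left hx.1, sup_le hx.2 hy.2⟩)
    (fun _ _ hx hy => ⟨le_inf hx.1 hy.1, inf_le_of_left_le hx.2⟩)

instance {q p : α} : IsModularLattice {y : α // q ≤ y ∧ y ≤ p} :=
  ⟨fun {_ _ _} h => IsModularLattice.sup_inf_le_assoc_of_le (α := α) _ h⟩

theorem sup_inf_eq_self_of_le_sup {q x n : α} (hq : q ≤ x) (hx : x ≤ q ⊔ n) :
    q ⊔ x ⊓ n = x := by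
  rw [inf_comm, ← sup_inf_assoc_of_le n hq, inf_eq_right.mpr hx]

theorem inf_sup_eq_self_of_inf_le {x p n : α} (hp : x ≤ p) (hx : n ⊓ p ≤ x) :
    (x ⊔ n) ⊓ p = x := by
  rw [sup_inf_assoc_of_le n hp, sup_eq_left.mpr hx]

/-- Split `[q, p]` at `q ⊔ n ⊓ p`: its lower and upper parts embed into `[q ⊓ n, p ⊓ n]` and
`[q ⊔ n, p ⊔ n]` respectively. -/
theorem devLE_Icc_of_devLE_inf_of_devLE_sup {o : Ordinal.{u}}
    (ih : ∀ (β : Type u) [Lattice β] [IsModularLattice β] (m : β),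
      DevLE {x : β // x ≤ m} o → DevLE {x : β // m ≤ x} o → DevLE β o)
    {q p n : α} (hqp : q ≤ p)
    (hinf : DevLE {y : α // q ⊓ n ≤ y ∧ y ≤ p ⊓ n} o)
    (hsup : DevLE {y : α // q ⊔ n ≤ y ∧ y ≤ p ⊔ n} o) :
    DevLE {y : α // q ≤ y ∧ y ≤ p} o := by
  let m : {y : α // q ≤ y ∧ y ≤ p} := ⟨q ⊔ n ⊓ p, le_sup_left, sup_le hqp inf_le_right⟩
  refine ih _ m ?_ ?_
  · have retract (x : {x // x ≤ m}) : q ⊔ x.1.1 ⊓ n = x.1.1 :=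
      sup_inf_eq_self_of_le_sup x.1.2.1 (le_trans (b := m.1) x.2 (sup_le_sup_left inf_le_left q))
    refine hinf.of_monotone_injective
      (F := fun x : {x // x ≤ m} =>
        ⟨x.1.1 ⊓ n, inf_le_inf_right n x.1.2.1, inf_le_inf_right n x.1.2.2⟩)
      (fun _ _ hxy => inf_le_inf_right n hxy) fun x y hxy => ?_
    have hxy : x.1.1 ⊓ n = y.1.1 ⊓ n := congrArg Subtype.val hxy
    ext
    rw [← retract x, ← retract y, hxy]
  · have retract (x : {x // m ≤ x}) : (x.1.1 ⊔ n) ⊓ p = x.1.1 :=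
      inf_sup_eq_self_of_inf_le x.1.2.2 (le_sup_right.trans (b := m.1) x.2)
    refine hsup.of_monotone_injective
      (F := fun x : {x // m ≤ x} =>
        ⟨x.1.1 ⊔ n, sup_le_sup_right x.1.2.1 n, sup_le_sup_right x.1.2.2 n⟩)
      (fun _ _ hxy => sup_le_sup_right (α := α) hxy n) fun x y hxy => ?_
    have hxy : x.1.1 ⊔ n = y.1.1 ⊔ n := congrArg Subtype.val hxy
    ext
    rw [← retract x, ← retract y, hxy]

end ModularLattice

/-- By modularity, a descending chain `f` stabilises as soon as both `f ⊓ n` and `f ⊔ n` do. -/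
theorem devLE_of_devLE_Iic_of_devLE_Ici {α : Type u} [Lattice α] [IsModularLattice α]
    {o : Ordinal.{u}} (n : α)
    (hl : DevLE {x : α // x ≤ n} o) (hu : DevLE {x : α // n ≤ x} o) : DevLE α o := by
  have ih (o' : Ordinal.{u}) (ho' : o' < o) (β : Type u) [Lattice β] [IsModularLattice β]
      (m : β) : DevLE {x : β // x ≤ m} o' → DevLE {x : β // m ≤ x} o' → DevLE β o' :=
    devLE_of_devLE_Iic_of_devLE_Ici m
  rw [devLE_iff]
  intro f hf
  obtain ⟨N₁, hN₁⟩ := devLE_iff.mp hl (fun k => ⟨f k ⊓ n, inf_le_right⟩)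
    (fun k => inf_le_inf_right n (hf k))
  obtain ⟨N₂, hN₂⟩ := devLE_iff.mp hu (fun k => ⟨f k ⊔ n, le_sup_right⟩)
    (fun k => sup_le_sup_right (hf k) n)
  refine ⟨max N₁ N₂, fun k hk => ?_⟩
  have step (o' : {x : Ordinal.{u} // x < o})
      (hinf : DevLE {y : α // f (k + 1) ⊓ n ≤ y ∧ y ≤ f k ⊓ n} o'.1)
      (hsup : DevLE {y : α // f (k + 1) ⊔ n ≤ y ∧ y ≤ f k ⊔ n} o'.1) :
      f k ≤ f (k + 1) ∨ ∃ o' : {x : Ordinal.{u} // x < o},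
        DevLE {y : α // f (k + 1) ≤ y ∧ y ≤ f k} o'.1 :=
    Or.inr ⟨o', devLE_Icc_of_devLE_inf_of_devLE_sup (ih o'.1 o'.2) (hf k) hinf hsup⟩
  rcases hN₁ k (le_of_max_le_left hk) with hinf | ⟨o₁, hinf⟩ <;>
    rcases hN₂ k (le_of_max_le_right hk) with hsup | ⟨o₂, hsup⟩
  · exact Or.inl (eq_of_le_of_inf_le_of_sup_le (hf k) hinf hsup).ge
  · exact step o₂ (devLE_Icc_of_le (α := α) hinf _)
      (hsup.Icc_of_Icc_subtype fun _ hy _ => le_sup_right.trans hy)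
  · exact step o₁ (hinf.Icc_of_Icc_subtype fun _ _ hy => hy.trans inf_le_right)
      (devLE_Icc_of_le (α := α) hsup _)
  · exact step ⟨max o₁.1 o₂.1, max_lt o₁.2 o₂.2⟩
      ((hinf.Icc_of_Icc_subtype fun _ _ hy => hy.trans inf_le_right).mono (le_max_left _ _))
      ((hsup.Icc_of_Icc_subtype fun _ hy _ => le_sup_right.trans hy).mono (le_max_right _ _))
termination_by o
decreasing_by exact ho'

section Module

variable {S M M' N : Type u} [Ring S] [AddCommGroup M] [AddCommGroup M'] [AddCommGroup N]
  [Module S M] [Module S M'] [Module S N]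

theorem devLE_submodule_of_range_eq_ker (g : M' →ₗ[S] M) (f : M →ₗ[S] N)
    (hgf : LinearMap.range g = LinearMap.ker f) {o : Ordinal.{u}}
    (h' : DevLE (Submodule S M') o) (h : DevLE (Submodule S N) o) :
    DevLE (Submodule S M) o := by
  refine devLE_of_devLE_Iic_of_devLE_Ici (LinearMap.ker f) ?_ ?_
  · refine h'.of_monotone_injective (F := fun K : {K // K ≤ LinearMap.ker f} => K.1.comap g)
      (fun _ _ hKL => Submodule.comap_mono hKL)
      fun K L (hKL : K.1.comap g = L.1.comap g) => Subtype.ext ?_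
    rw [← Submodule.map_comap_eq_self (K.2.trans hgf.ge), hKL,
      Submodule.map_comap_eq_self (L.2.trans hgf.ge)]
  · refine h.of_monotone_injective (F := fun K : {K // LinearMap.ker f ≤ K} => K.1.map f)
      (fun _ _ hKL => Submodule.map_mono hKL)
      fun K L (hKL : K.1.map f = L.1.map f) => Subtype.ext ?_
    rw [← Submodule.comap_map_eq_self K.2, hKL, Submodule.comap_map_eq_self L.2]

theorem DevLE.submodule_pi {o : Ordinal.{u}} (h : DevLE (Submodule S M) o) :
    ∀ m : ℕ, DevLE (Submodule S (Fin m → M)) o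
  | 0 => haveI := Submodule.subsingleton_iff S |>.mpr (inferInstance : Subsingleton (Fin 0 → M))
    devLE_of_subsingleton o
  | m + 1 =>
    let e := (Fin.consLinearEquiv S fun _ : Fin (m + 1) => M).symm
    (devLE_submodule_of_range_eq_ker (LinearMap.inl S M _) (LinearMap.snd S M _)
      (LinearMap.range_inl S M _) h (h.submodule_pi m)).of_monotone_injective
      (F := Submodule.map e.toLinearMap) (fun _ _ hKL => Submodule.map_mono hKL)
      (Submodule.map_injective_of_injective e.injective)

end Module

section Ring

variable {R : Type u} [Ring R]

theorem mem_rAnnIdeal {S : Set R} {b : R} : b ∈ rAnnIdeal R S ↔ ∀ y ∈ S, y * b = 0 :=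
  Iff.rfl

theorem rAnnIdeal_span (S : Set R) : rAnnIdeal R (Submodule.span R S) = rAnnIdeal R S := by
  ext b
  refine ⟨fun hb y hy => hb y (Submodule.subset_span hy), fun hb y hy => ?_⟩
  induction hy using Submodule.span_induction with
  | mem x hx => exact hb x hx
  | zero => exact zero_mul b
  | add x y _ _ hx hy => rw [add_mul, hx, hy, add_zero]
  | smul c x _ hx => rw [smul_eq_mul, mul_assoc, hx, mul_zero]

theorem IsPrimeT.rAnnIdeal_le {A P : TwoSidedIdeal R} (hP : IsPrimeT P) (hAP : ¬A ≤ P) :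
    rAnnIdeal R A ≤ rightIdealOf P := by
  intro b hb
  obtain ⟨a, haA, haP⟩ := SetLike.not_le_iff_exists.mp hAP
  refine (hP.2 a b fun r => ?_).resolve_left haP
  rw [hb _ (A.mul_mem_right a r haA)]
  exact P.zero_mem

/-- The map is `r ↦ (gᵢ r)ᵢ` for generators `gᵢ` of `A` as a left ideal. -/
theorem exists_linearMap_pi_ker_eq_rAnnIdeal [IsNoetherianRing R] (A : TwoSidedIdeal R) :
    ∃ (m : ℕ) (φ : R →ₗ[Rᵐᵒᵖ] (Fin m → rightIdealOf A)),
      LinearMap.ker φ = rAnnIdeal R A := by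
  obtain ⟨m, g, hg⟩ :=
    Submodule.fg_iff_exists_fin_generating_family.mp (IsNoetherian.noetherian (leftIdealOf A))
  have hA : (A : Set R) = Submodule.span R (Set.range g) := by rw [hg]; rfl
  have hgA (i : Fin m) : g i ∈ A := by
    rw [← SetLike.mem_coe, hA]
    exact Submodule.subset_span (Set.mem_range_self i)
  refine ⟨m, LinearMap.pi fun i => (LinearMap.mulLeft Rᵐᵒᵖ (g i)).codRestrict _
    fun r => A.mul_mem_right _ r (hgA i), ?_⟩
  rw [hA, rAnnIdeal_span]
  ext b
  simp only [LinearMap.mem_ker, mem_rAnnIdeal, Set.forall_mem_range, funext_iff,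
    LinearMap.pi_apply, Pi.zero_apply, Subtype.ext_iff, ZeroMemClass.coe_zero]
  rfl

def RingCon.comapRightIdeal (c : RingCon R) (J : Submodule c.Quotientᵐᵒᵖ c.Quotient) :
    Submodule Rᵐᵒᵖ R where
  carrier := c.mk' ⁻¹' J
  zero_mem' := by simp
  add_mem' hx hy := by simpa using J.add_mem hx hy
  smul_mem' r x hx := by simpa using J.smul_mem (MulOpposite.op (c.mk' r.unop)) hx

theorem RingCon.comapRightIdeal_mono (c : RingCon R) : Monotone c.comapRightIdeal :=
  fun _ _ hJ _ hx => hJ hx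

theorem RingCon.comapRightIdeal_injective (c : RingCon R) :
    Function.Injective c.comapRightIdeal := by
  intro J J' h
  ext q
  obtain ⟨x, rfl⟩ := c.mk'_surjective q
  exact SetLike.ext_iff.mp h x

theorem devLE_quotient_of_ker_le {P : TwoSidedIdeal R} {M : Type u} [AddCommGroup M]
    [Module Rᵐᵒᵖ M] (φ : R →ₗ[Rᵐᵒᵖ] M) (hφ : LinearMap.ker φ ≤ rightIdealOf P) {o : Ordinal.{u}}
    (h : DevLE (Submodule Rᵐᵒᵖ M) o) :
    DevLE (Submodule P.ringCon.Quotientᵐᵒᵖ P.ringCon.Quotient) o := by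
  have hker (J) : LinearMap.ker φ ≤ P.ringCon.comapRightIdeal J := fun x hx => by
    show P.ringCon.mk' x ∈ J
    rw [show P.ringCon.mk' x = 0 from (RingCon.eq _).mpr ((P.mem_iff x).mp (hφ hx))]
    exact J.zero_mem
  refine h.of_monotone_injective (F := fun J => (P.ringCon.comapRightIdeal J).map φ)
    (fun _ _ hJ => Submodule.map_mono (P.ringCon.comapRightIdeal_mono hJ))
    fun J J' (hJJ' : (P.ringCon.comapRightIdeal J).map φ =
      (P.ringCon.comapRightIdeal J').map φ) => P.ringCon.comapRightIdeal_injective ?_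
  rw [← Submodule.comap_map_eq_self (hker J), hJJ', Submodule.comap_map_eq_self (hker J')]

theorem rKdimQ_le_rIdealDim_of_not_le [IsNoetherianRing R] {A P : TwoSidedIdeal R}
    (hR : ∃ o, DevLE (Submodule Rᵐᵒᵖ R) o) (hP : IsPrimeT P) (hAP : ¬A ≤ P) :
    rKdimQ P ≤ rIdealDim R (rightIdealOf A) := by
  obtain ⟨m, φ, hφ⟩ := exists_linearMap_pi_ker_eq_rAnnIdeal A
  obtain ⟨o, ho⟩ := hR
  have hA : DevLE {I : Submodule Rᵐᵒᵖ R // I ≤ rightIdealOf A} (rIdealDim R (rightIdealOf A)) :=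
    devLE_dev ⟨o, ho.of_monotone_injective (F := Subtype.val) (fun _ _ h => h)
      Subtype.val_injective⟩
  let e := Submodule.MapSubtype.orderIso (rightIdealOf A)
  exact dev_le_of_devLE <| devLE_quotient_of_ker_le φ (hφ.trans_le (hP.rAnnIdeal_le hAP))
    ((hA.of_monotone_injective e.monotone e.injective).submodule_pi m)

end Ring

theorem stmt7_general (R : Type u) [Ring R] [IsNoetherianRing R]
    (A : TwoSidedIdeal R)
    (h1 : rIdealDim R (rightIdealOf A) < rKdim R) :
    (∀ P : TwoSidedIdeal R, IsPrimeT P → rKdimQ P = rKdim R → A ≤ P) ∧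
      Lam R = {P : TwoSidedIdeal R | IsPrimeT P ∧ A ≤ P ∧ rKdimQ P = rKdim R} := by
  have hR : ∃ o, DevLE (Submodule Rᵐᵒᵖ R) o :=
    exists_devLE_of_dev_ne_zero (pos_of_gt h1).ne'
  have hle (P : TwoSidedIdeal R) (hP : IsPrimeT P) (hPd : rKdimQ P = rKdim R) : A ≤ P := by
    by_contra hAP
    exact ((rKdimQ_le_rIdealDim_of_not_le hR hP hAP).trans_lt h1).ne hPd
  refine ⟨hle, Set.ext fun P => ?_⟩
  exact ⟨fun ⟨hP, hPd⟩ => ⟨hP, hle P hP hPd, hPd⟩, fun ⟨hP, _, hPd⟩ => ⟨hP, hPd⟩⟩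

/-- If `A ≠ 0` is the largest right ideal with small Krull dimension, then
every prime of full right Krull dimension contains `A`, and hence `Λ(R) = Λ(R/A)`. -/
theorem stmt7 (R : Type u) [Ring R] [IsNoetherianRing R] [IsNoetherianRing Rᵐᵒᵖ]
    (A : TwoSidedIdeal R)
    (h1 : rIdealDim R (rightIdealOf A) < rKdim R)
    (h2 : ∀ I : Submodule Rᵐᵒᵖ R, rIdealDim R I < rKdim R → I ≤ rightIdealOf A)
    (hne : A ≠ ⊥) :
    (∀ P : TwoSidedIdeal R, IsPrimeT P → rKdimQ P = rKdim R → A ≤ P) ∧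
      Lam R = {P : TwoSidedIdeal R | IsPrimeT P ∧ A ≤ P ∧ rKdimQ P = rKdim R} :=
  stmt7_general R A h1
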